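/- The trimming operator T_k satisfies T_k = R_k ∘ ∂_k = R_{k+1} ∘ ∂_k, where ∂_k is the divided difference operator; that is, for every polynomial f, (R_{k+1}f - R_k f)/x_k = R_k(∂_k f) = R_{k+1}(∂_k f). -/

import Mathlib

open MvPolynomial

/-!
Since `R_k ∘ s_k = R_{k+1}` and `R_{k+1} ∘ s_k = R_k`, applying `R_k` and `R_{k+1}` to
`f - s_k f = (x_k - x_{k+1}) ∂_k f` gives `R_k f - R_{k+1} f = -x_k R_k(∂_k f)` and
`R_{k+1} f - R_k f = x_k R_{k+1}(∂_k f)`; comparing the two and cancelling `x_k` in the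
domain `ℤ[x]` yields `R_k(∂_k f) = R_{k+1}(∂_k f)`.
-/

/-- The Bergeron–Sottile operator `R_k` on the polynomial ring `ℤ[x_1, x_2, …]`. -/
noncomputable def Rop (k : ℕ+) : MvPolynomial ℕ+ ℤ →ₐ[ℤ] MvPolynomial ℕ+ ℤ :=
  aeval fun i => if i < k then X i else if i = k then 0 else X (i - 1)

namespace MvPolynomial

variable {σ : Type*}

theorem dvd_sub_of_forall_dvd_sub_X {R S : Type*} [CommSemiring R] [CommRing S] [Algebra R S]
    (φ ψ : MvPolynomial σ R →ₐ[R] S) {a : S}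
    (h : ∀ i, a ∣ φ (X i) - ψ (X i)) (f : MvPolynomial σ R) : a ∣ φ f - ψ f := by
  have hmod : (Ideal.Quotient.mkₐ R (Ideal.span {a})).comp φ =
      (Ideal.Quotient.mkₐ R (Ideal.span {a})).comp ψ :=
    algHom_ext fun i => by
      simpa [Ideal.Quotient.mkₐ_eq_mk, Ideal.Quotient.eq, Ideal.mem_span_singleton] using h i
  simpa [Ideal.Quotient.mkₐ_eq_mk, Ideal.Quotient.eq, Ideal.mem_span_singleton] using
    DFunLike.congr_fun hmod f

theorem X_sub_X_dvd_sub_rename_swap {R : Type*} [CommRing R] [DecidableEq σ] (i j : σ)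
    (f : MvPolynomial σ R) : X i - X j ∣ f - rename (Equiv.swap i j) f := by
  refine dvd_sub_of_forall_dvd_sub_X (AlgHom.id R _) (rename (Equiv.swap i j)) (fun n => ?_) f
  rw [AlgHom.id_apply, rename_X]
  rcases eq_or_ne n i with rfl | hi
  · simp
  rcases eq_or_ne n j with rfl | hj
  · exact ⟨-1, by simp⟩
  · simp [Equiv.swap_apply_of_ne_of_ne hi hj]

end MvPolynomial

section Rop

variable (k : ℕ+)

theorem Rop_X_of_lt {i : ℕ+} (h : i < k) : Rop k (X i) = X i := by
  simp [Rop, h]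

theorem Rop_X_self : Rop k (X k) = 0 := by
  simp [Rop]

theorem Rop_X_of_gt {i : ℕ+} (h : k < i) : Rop k (X i) = X (i - 1) := by
  simp [Rop, h.not_gt, h.ne']

theorem Rop_X_add_one : Rop k (X (k + 1)) = X k := by
  rw [Rop_X_of_gt k (PNat.lt_add_right k 1), PNat.add_sub]

theorem Rop_add_one_X_self : Rop (k + 1) (X k) = X k :=
  Rop_X_of_lt (k + 1) (PNat.lt_add_right k 1)

theorem Rop_comp_rename_swap :
    (Rop k).comp (rename (Equiv.swap k (k + 1))) = Rop (k + 1) := by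
  refine algHom_ext fun i => ?_
  rw [AlgHom.comp_apply, rename_X]
  rcases eq_or_ne i k with rfl | hik
  · rw [Equiv.swap_apply_left, Rop_X_add_one, Rop_add_one_X_self]
  rcases eq_or_ne i (k + 1) with rfl | hik1
  · rw [Equiv.swap_apply_right, Rop_X_self, Rop_X_self]
  rw [Equiv.swap_apply_of_ne_of_ne hik hik1]
  rcases hik.lt_or_gt with hlt | hgt
  · rw [Rop_X_of_lt k hlt, Rop_X_of_lt (k + 1) (hlt.trans (PNat.lt_add_right k 1))]
  · have hgt1 : k + 1 < i := lt_of_le_of_ne (PNat.add_one_le_iff.mpr hgt) hik1.symm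
    rw [Rop_X_of_gt k hgt, Rop_X_of_gt (k + 1) hgt1]

theorem Rop_rename_swap (f : MvPolynomial ℕ+ ℤ) :
    Rop k (rename (Equiv.swap k (k + 1)) f) = Rop (k + 1) f :=
  DFunLike.congr_fun (Rop_comp_rename_swap k) f

theorem Rop_add_one_rename_swap (f : MvPolynomial ℕ+ ℤ) :
    Rop (k + 1) (rename (Equiv.swap k (k + 1)) f) = Rop k f := by
  rw [← Rop_rename_swap, rename_rename, ← Equiv.coe_trans, Equiv.swap_swap, Equiv.coe_refl,
    rename_id_apply]

end Rop

/-- The trimming operator satisfies `T_k = R_k ∘ ∂_k = R_{k+1} ∘ ∂_k`: for every `f`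
there is `d` with `f - s_k f = (x_k - x_{k+1})·d` (so `d = ∂_k f`), and
`R_{k+1} f - R_k f = x_k · R_k(d)` (in particular `x_k` divides `R_{k+1} f - R_k f`,
and `T_k f = R_k(∂_k f)`), with moreover `R_k(d) = R_{k+1}(d)`. -/
theorem stmt11 (k : ℕ+) (f : MvPolynomial ℕ+ ℤ) :
    ∃ d : MvPolynomial ℕ+ ℤ,
      f - rename (Equiv.swap k (k + 1)) f = (X k - X (k + 1)) * d ∧
      Rop (k + 1) f - Rop k f = X k * Rop k d ∧
      Rop k d = Rop (k + 1) d := by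
  obtain ⟨d, hd⟩ := X_sub_X_dvd_sub_rename_swap k (k + 1) f
  have hRk := congrArg (Rop k) hd
  simp only [map_sub, map_mul, Rop_rename_swap, Rop_X_self, Rop_X_add_one] at hRk
  have hRk1 := congrArg (Rop (k + 1)) hd
  simp only [map_sub, map_mul, Rop_add_one_rename_swap, Rop_X_self, Rop_add_one_X_self] at hRk1
  refine ⟨d, hd, by linear_combination -hRk, ?_⟩
  exact mul_left_cancel₀ (X_ne_zero k) (by linear_combination hRk + hRk1)
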